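/- Let n1, n2 ≥ 2 be integers and consider the DFA M̂ defined as follows: the alphabet is Σ = (Fin n1 → Fin n1) × (Fin n2 → Fin n2); the states are the subsets of Fin n1 × Fin n2; the initial state is ∅; a state T is final iff T = ∅ or (n1−1, n2−1) ∈ T; the transition on a state E by a letter (f,g) is cl(E′), where E′ = {(f(0), g(0))} if E = ∅ and E′ = {(f(i), g(j)) | (i,j) ∈ E} otherwise, and cl(S) = S ∪ {(0,0)} if (n1−1, n2−1) ∈ S and cl(S) = S otherwise. Then any two distinct subsets T ≠ T′ of Fin n1 × Fin n2, each satisfying ((n1−1, n2−1) ∈ T implies (0,0) ∈ T), are separable in M̂: there exists a word w over Σ such that exactly one of the two states reached by reading w from T and from T′ is final. -/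

import Mathlib

attribute [local instance] Classical.propDecidable

/-- The transition function of the DFA `M̂`: on a state `E ⊆ Fin n1 × Fin n2` and a
letter `(f, g)`, first form `E' = {(f 0, g 0)}` if `E = ∅` and
`E' = {(f i, g j) | (i,j) ∈ E}` otherwise, then add `(0,0)` to `E'` whenever
`(n1-1, n2-1) ∈ E'`. -/
noncomputable def starInterStep (n1 n2 : ℕ) (h1 : 0 < n1) (h2 : 0 < n2)
    (E : Set (Fin n1 × Fin n2)) (a : (Fin n1 → Fin n1) × (Fin n2 → Fin n2)) :
    Set (Fin n1 × Fin n2) :=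
  let E' : Set (Fin n1 × Fin n2) :=
    if E = ∅ then {(a.1 ⟨0, h1⟩, a.2 ⟨0, h2⟩)}
    else (fun p : Fin n1 × Fin n2 => (a.1 p.1, a.2 p.2)) '' E
  if ((⟨n1 - 1, Nat.sub_lt h1 Nat.one_pos⟩ : Fin n1),
      (⟨n2 - 1, Nat.sub_lt h2 Nat.one_pos⟩ : Fin n2)) ∈ E' then
    insert ((⟨0, h1⟩ : Fin n1), (⟨0, h2⟩ : Fin n2)) E'
  else E'

/-- A state `S` of the DFA `M̂` is final iff `S = ∅` or `(n1-1, n2-1) ∈ S`. -/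
def starInterFinal (n1 n2 : ℕ) (h1 : 0 < n1) (h2 : 0 < n2)
    (S : Set (Fin n1 × Fin n2)) : Prop :=
  S = ∅ ∨ ((⟨n1 - 1, Nat.sub_lt h1 Nat.one_pos⟩ : Fin n1),
           (⟨n2 - 1, Nat.sub_lt h2 Nat.one_pos⟩ : Fin n2)) ∈ S
/-!
Reading one letter `(f, g)` from a nonempty state `E` yields a final state exactly when some
`(i, j) ∈ E` is sent to `(n1 - 1, n2 - 1)`: the image is nonempty, and adding `(0, 0)` does not
change finality. So if `p ∈ T \ T'`, the letter sending `p` to `(n1 - 1, n2 - 1)` and everything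
else to `0` separates `T` from `T'`, unless `T' = ∅` (which reads `(0, 0)`) and `p = (0, 0)`.
In that case either `(n1 - 1, n2 - 1) ∈ T`, and the same letter for this point separates, or `T`
is not final while `T' = ∅` is, and the empty word separates.
-/

namespace StarInter

section

variable {n1 n2 : ℕ} (h1 : 0 < n1) (h2 : 0 < n2)

def lastPair : Fin n1 × Fin n2 :=
  (⟨n1 - 1, Nat.sub_lt h1 Nat.one_pos⟩, ⟨n2 - 1, Nat.sub_lt h2 Nat.one_pos⟩)

def originPair : Fin n1 × Fin n2 := (⟨0, h1⟩, ⟨0, h2⟩)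

theorem starInterFinal_starInterStep_empty (a : (Fin n1 → Fin n1) × (Fin n2 → Fin n2)) :
    starInterFinal n1 n2 h1 h2 (starInterStep n1 n2 h1 h2 ∅ a) ↔
      Prod.map a.1 a.2 (originPair h1 h2) = lastPair h1 h2 := by
  unfold starInterStep starInterFinal
  simp only [if_true]
  split_ifs <;> simp_all [lastPair, originPair, eq_comm]

theorem starInterFinal_starInterStep_of_nonempty {E : Set (Fin n1 × Fin n2)} (hE : E.Nonempty)
    (a : (Fin n1 → Fin n1) × (Fin n2 → Fin n2)) :
    starInterFinal n1 n2 h1 h2 (starInterStep n1 n2 h1 h2 E a) ↔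
      lastPair h1 h2 ∈ Prod.map a.1 a.2 '' E := by
  unfold starInterStep starInterFinal
  simp only [hE.ne_empty, if_false]
  split_ifs <;> simp_all [lastPair, hE.ne_empty, Prod.map]

def pointLetter (p : Fin n1 × Fin n2) : (Fin n1 → Fin n1) × (Fin n2 → Fin n2) :=
  (fun x => if x = p.1 then (lastPair h1 h2).1 else (originPair h1 h2).1,
   fun y => if y = p.2 then (lastPair h1 h2).2 else (originPair h1 h2).2)

def Separable (T T' : Set (Fin n1 × Fin n2)) : Prop :=
  ∃ w : List ((Fin n1 → Fin n1) × (Fin n2 → Fin n2)),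
    Xor (starInterFinal n1 n2 h1 h2 (w.foldl (starInterStep n1 n2 h1 h2) T))
      (starInterFinal n1 n2 h1 h2 (w.foldl (starInterStep n1 n2 h1 h2) T'))

variable {h1 h2} in
theorem Separable.symm {T T' : Set (Fin n1 × Fin n2)} (h : Separable h1 h2 T T') :
    Separable h1 h2 T' T :=
  let ⟨w, hw⟩ := h
  ⟨w, xor_comm _ _ ▸ hw⟩

end

section

variable {n1 n2 : ℕ} (h1 : 1 < n1) (h2 : 1 < n2)

theorem originPair_ne_lastPair : originPair h1.pos h2.pos ≠ lastPair h1.pos h2.pos := by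
  simp [originPair, lastPair, Fin.ext_iff]
  omega

theorem map_pointLetter_eq_lastPair_iff (p q : Fin n1 × Fin n2) :
    Prod.map (pointLetter h1.pos h2.pos p).1 (pointLetter h1.pos h2.pos p).2 q =
      lastPair h1.pos h2.pos ↔ q = p := by
  have : (originPair h1.pos h2.pos).1 ≠ (lastPair h1.pos h2.pos).1 := by
    simp [originPair, lastPair, Fin.ext_iff]
    omega
  have : (originPair h1.pos h2.pos).2 ≠ (lastPair h1.pos h2.pos).2 := by
    simp [originPair, lastPair, Fin.ext_iff]
    omega
  simp only [pointLetter, Prod.ext_iff, Prod.map_fst, Prod.map_snd]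
  split_ifs <;> simp_all

theorem starInterFinal_starInterStep_pointLetter_of_nonempty {E : Set (Fin n1 × Fin n2)}
    (hE : E.Nonempty) (p : Fin n1 × Fin n2) :
    starInterFinal n1 n2 h1.pos h2.pos
      (starInterStep n1 n2 h1.pos h2.pos E (pointLetter h1.pos h2.pos p)) ↔ p ∈ E := by
  simp [starInterFinal_starInterStep_of_nonempty _ _ hE, map_pointLetter_eq_lastPair_iff h1 h2]

theorem starInterFinal_starInterStep_empty_pointLetter (p : Fin n1 × Fin n2) :
    starInterFinal n1 n2 h1.pos h2.pos
      (starInterStep n1 n2 h1.pos h2.pos ∅ (pointLetter h1.pos h2.pos p)) ↔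
        originPair h1.pos h2.pos = p :=
  (starInterFinal_starInterStep_empty _ _ _).trans (map_pointLetter_eq_lastPair_iff h1 h2 _ _)

theorem separable_pointLetter {T T' : Set (Fin n1 × Fin n2)} {p : Fin n1 × Fin n2}
    (hp : p ∈ T) (hp' : p ∉ T') (h0 : T' = ∅ → p ≠ originPair h1.pos h2.pos) :
    Separable h1.pos h2.pos T T' := by
  refine ⟨[pointLetter h1.pos h2.pos p], Or.inl ⟨?_, ?_⟩⟩
  · exact (starInterFinal_starInterStep_pointLetter_of_nonempty h1 h2 ⟨p, hp⟩ p).2 hp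
  · rcases T'.eq_empty_or_nonempty with rfl | hT'
    · exact fun h => h0 rfl ((starInterFinal_starInterStep_empty_pointLetter h1 h2 p).1 h).symm
    · exact fun h => hp' ((starInterFinal_starInterStep_pointLetter_of_nonempty h1 h2 hT' p).1 h)

theorem separable_of_mem_of_notMem {T T' : Set (Fin n1 × Fin n2)} {p : Fin n1 × Fin n2}
    (hp : p ∈ T) (hp' : p ∉ T') : Separable h1.pos h2.pos T T' := by
  by_cases h0 : T' = ∅ ∧ p = originPair h1.pos h2.pos
  · obtain ⟨rfl, rfl⟩ := h0
    by_cases hlast : lastPair h1.pos h2.pos ∈ T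
    · exact separable_pointLetter h1 h2 hlast (Set.notMem_empty _)
        fun _ => (originPair_ne_lastPair h1 h2).symm
    · refine ⟨[], Or.inr ⟨Or.inl rfl, ?_⟩⟩
      rintro (hT | hT)
      · exact Set.eq_empty_iff_forall_notMem.1 hT _ hp
      · exact hlast hT
  · exact separable_pointLetter h1 h2 hp hp' fun hT' hp0 => h0 ⟨hT', hp0⟩

theorem separable_of_ne {T T' : Set (Fin n1 × Fin n2)} (hne : T ≠ T') :
    Separable h1.pos h2.pos T T' := by
  obtain ⟨p, hp⟩ := Set.symmDiff_nonempty.2 hne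
  rcases Set.mem_symmDiff.1 hp with ⟨hpT, hpT'⟩ | ⟨hpT', hpT⟩
  · exact separable_of_mem_of_notMem h1 h2 hpT hpT'
  · exact (separable_of_mem_of_notMem h1 h2 hpT' hpT).symm

end

end StarInter

/-- any two distinct states `T ≠ T'` of `M̂`, each satisfying
`(n1-1, n2-1) ∈ · → (0,0) ∈ ·`, are separable: some word leads exactly one of them
to a final state. -/
theorem stmt3 (n1 n2 : ℕ) (h1 : 2 ≤ n1) (h2 : 2 ≤ n2)
    (T T' : Set (Fin n1 × Fin n2)) (hne : T ≠ T') :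
    ∃ w : List ((Fin n1 → Fin n1) × (Fin n2 → Fin n2)),
      Xor' (starInterFinal n1 n2 (by omega) (by omega)
              (w.foldl (starInterStep n1 n2 (by omega) (by omega)) T))
           (starInterFinal n1 n2 (by omega) (by omega)
              (w.foldl (starInterStep n1 n2 (by omega) (by omega)) T')) :=
  StarInter.separable_of_ne h1 h2 hne
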